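/- In a vacuum region of a Lorentzian 4-manifold (Ric = 0, so W = Riem), let ρ̂ = (1/4)W(L̂, L̂̄, L̂, L̂̄) be the only non-vanishing null component of the Weyl tensor relative to a canonical null tetrad {e₄ = n⁻¹L̂, e₃ = n⁻¹L̂̄, ê_A}, and let L = (n⁻¹/2)[(2−μ)L̂ + μ L̂̄] + ΣN and L̄ = (n⁻¹/2)[μ L̂ + (2−μ)L̂̄] − ΣN with ΣN tangent to the spheres, μ = 1 − n⁻¹ϖ, and |ΣN|²_g = 1 − n⁻²ϖ². Then (1/4)W(L, L̄, L, L̄) = n⁻⁴ ρ̂ ( n⁻²ϖ² − (1/2)(1 − n⁻²ϖ²) ). -/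
import Mathlib


/-- In a vacuum region, let `ρ̂ = (1/4)W(L̂, L̂̄, L̂, L̂̄)` be the only
non-vanishing null component of the Weyl tensor `W` relative to the canonical
null tetrad `{n⁻¹L̂, n⁻¹L̂̄, ê_A}`.  For
`L = (n⁻¹/2)[(2−μ)L̂ + μL̂̄] + SN` and `L̄ = (n⁻¹/2)[μL̂ + (2−μ)L̂̄] − SN`
with `SN` tangent to the spheres, `μ = 1 − n⁻¹ϖ` and `|SN|² = 1 − n⁻²ϖ²`,
one has
`(1/4)W(L,L̄,L,L̄) = n⁻⁴ρ̂(n⁻²ϖ² − (1/2)(1 − n⁻²ϖ²))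
                  = n⁻⁴ρ̂(1 + (3/2)(n⁻²ϖ² − 1))`. -/
theorem weyl_rho_in_hyperboloidal_frame
    {V : Type*} [AddCommGroup V] [Module ℝ V]
    (W : MultilinearMap ℝ (fun _ : Fin 4 => V) ℝ)
    -- symmetries of a Weyl tensor
    (hanti1 : ∀ a b c d : V, W ![a, b, c, d] = - W ![b, a, c, d])
    (hanti2 : ∀ a b c d : V, W ![a, b, c, d] = - W ![a, b, d, c])
    (hpair : ∀ a b c d : V, W ![a, b, c, d] = W ![c, d, a, b])
    (Lh Lbh : V) (e : Fin 2 → V)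
    (n ϖ : ℝ) (hn : 0 < n)
    (ρh : ℝ) (hρh : ρh = (1/4) * W ![Lh, Lbh, Lh, Lbh])
    -- all null components of `W` vanish except `ρ̂`
    (hα : ∀ A B : Fin 2, W ![Lh, e A, Lh, e B] = 0)
    (hαb : ∀ A B : Fin 2, W ![Lbh, e A, Lbh, e B] = 0)
    (hβ : ∀ A : Fin 2, W ![e A, Lh, Lbh, Lh] = 0)
    (hβb : ∀ A : Fin 2, W ![e A, Lbh, Lbh, Lh] = 0)
    (hσ : ∀ A B : Fin 2, W ![e A, e B, Lbh, Lh] = 0)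
    (hρAB : ∀ A B : Fin 2,
      W ![e A, n⁻¹ • Lbh, e B, n⁻¹ • Lh]
        = -((n⁻¹)^4 * ρh) * (if A = B then 1 else 0))
    (h3 : ∀ A B C : Fin 2, W ![e A, e B, e C, Lh] = 0)
    (h3b : ∀ A B C : Fin 2, W ![e A, e B, e C, Lbh] = 0)
    (h4 : ∀ A B C D : Fin 2,
      W ![e A, e B, e C, e D]
        = -((n⁻¹)^4 * ρh) * (if A = B then 0 else if A = 0 then 1 else -1)
            * (if C = D then 0 else if C = 0 then 1 else -1))
    -- `SN` tangent to the spheres, with `|SN|² = 1 − n⁻²ϖ²`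
    (c : Fin 2 → ℝ) (SN : V) (hSN : SN = c 0 • e 0 + c 1 • e 1)
    (hnorm : (c 0)^2 + (c 1)^2 = 1 - (n⁻¹ * ϖ)^2)
    (μ : ℝ) (hμ : μ = 1 - n⁻¹ * ϖ)
    (L Lb : V)
    (hL : L = ((n⁻¹/2) * (2 - μ)) • Lh + ((n⁻¹/2) * μ) • Lbh + SN)
    (hLb : Lb = ((n⁻¹/2) * μ) • Lh + ((n⁻¹/2) * (2 - μ)) • Lbh - SN) :
    (1/4) * W ![L, Lb, L, Lb]
        = (n⁻¹)^4 * ρh * ((n⁻¹ * ϖ)^2 - (1/2) * (1 - (n⁻¹ * ϖ)^2)) ∧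
    (1/4) * W ![L, Lb, L, Lb]
        = (n⁻¹)^4 * ρh * (1 + (3/2) * ((n⁻¹ * ϖ)^2 - 1)) := by
  have hn' : (n : ℝ) ≠ 0 := ne_of_gt hn
  have hs : (n⁻¹ : ℝ) ≠ 0 := inv_ne_zero hn'
  -- update lemmas
  have upd0 : ∀ (a b c d x : V), Function.update ![a,b,c,d] (0 : Fin 4) x = ![x,b,c,d] := by
    intro a b c d x; funext i; fin_cases i <;> simp
  have upd1 : ∀ (a b c d x : V), Function.update ![a,b,c,d] (1 : Fin 4) x = ![a,x,c,d] := by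
    intro a b c d x; funext i; fin_cases i <;> simp
  have upd2 : ∀ (a b c d x : V), Function.update ![a,b,c,d] (2 : Fin 4) x = ![a,b,x,d] := by
    intro a b c d x; funext i; fin_cases i <;> simp
  have upd3 : ∀ (a b c d x : V), Function.update ![a,b,c,d] (3 : Fin 4) x = ![a,b,c,x] := by
    intro a b c d x; funext i; fin_cases i <;> simp
  -- linearity in each slot
  have Wadd0 : ∀ a a' b c d : V, W ![a+a',b,c,d] = W ![a,b,c,d] + W ![a',b,c,d] := by
    intro a a' b c d; simpa [upd0] using W.map_update_add ![a,b,c,d] 0 a a'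
  have Wadd1 : ∀ a b b' c d : V, W ![a,b+b',c,d] = W ![a,b,c,d] + W ![a,b',c,d] := by
    intro a b b' c d; simpa [upd1] using W.map_update_add ![a,b,c,d] 1 b b'
  have Wadd2 : ∀ a b c c' d : V, W ![a,b,c+c',d] = W ![a,b,c,d] + W ![a,b,c',d] := by
    intro a b c c' d; simpa [upd2] using W.map_update_add ![a,b,c,d] 2 c c'
  have Wadd3 : ∀ a b c d d' : V, W ![a,b,c,d+d'] = W ![a,b,c,d] + W ![a,b,c,d'] := by
    intro a b c d d'; simpa [upd3] using W.map_update_add ![a,b,c,d] 3 d d'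
  have Wsmul0 : ∀ (r : ℝ) (a b c d : V), W ![r • a,b,c,d] = r * W ![a,b,c,d] := by
    intro r a b c d; simpa [upd0] using W.map_update_smul ![a,b,c,d] 0 r a
  have Wsmul1 : ∀ (r : ℝ) (a b c d : V), W ![a,r • b,c,d] = r * W ![a,b,c,d] := by
    intro r a b c d; simpa [upd1] using W.map_update_smul ![a,b,c,d] 1 r b
  have Wsmul2 : ∀ (r : ℝ) (a b c d : V), W ![a,b,r • c,d] = r * W ![a,b,c,d] := by
    intro r a b c d; simpa [upd2] using W.map_update_smul ![a,b,c,d] 2 r c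
  have Wsmul3 : ∀ (r : ℝ) (a b c d : V), W ![a,b,c,r • d] = r * W ![a,b,c,d] := by
    intro r a b c d; simpa [upd3] using W.map_update_smul ![a,b,c,d] 3 r d
  have Wsub1 : ∀ a b b' c d : V, W ![a,b - b',c,d] = W ![a,b,c,d] - W ![a,b',c,d] := by
    intro a b b' c d
    rw [sub_eq_add_neg, ← neg_one_smul ℝ b', Wadd1, Wsmul1]; ring
  have Wsub3 : ∀ a b c d d' : V, W ![a,b,c,d - d'] = W ![a,b,c,d] - W ![a,b,c,d'] := by
    intro a b c d d'
    rw [sub_eq_add_neg, ← neg_one_smul ℝ d', Wadd3, Wsmul3]; ring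
  -- vanishing on repeated arguments
  have z12 : ∀ a c d : V, W ![a,a,c,d] = 0 := by
    intro a c d; have h := hanti1 a a c d; linarith
  have z34 : ∀ a b c : V, W ![a,b,c,c] = 0 := by
    intro a b c; have h := hanti2 a b c c; linarith
  -- values of null components
  have v1 : W ![Lh,Lbh,Lh,Lbh] = 4*ρh := by rw [hρh]; ring
  have v2 : W ![Lh,Lbh,Lbh,Lh] = -(4*ρh) := by
    rw [hanti2 Lh Lbh Lbh Lh, v1]
  have v3 : W ![Lbh,Lh,Lh,Lbh] = -(4*ρh) := by
    rw [hanti1 Lbh Lh Lh Lbh, v1]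
  have v4 : W ![Lbh,Lh,Lbh,Lh] = 4*ρh := by
    rw [hanti1 Lbh Lh Lbh Lh, v2]; ring
  -- β-type components
  have b1 : ∀ A : Fin 2, W ![e A, Lh, Lh, Lbh] = 0 := by
    intro A; rw [hanti2 (e A) Lh Lh Lbh, hβ A]; ring
  have b3 : ∀ A : Fin 2, W ![e A, Lbh, Lh, Lbh] = 0 := by
    intro A; rw [hanti2 (e A) Lbh Lh Lbh, hβb A]; ring
  have c1 : ∀ A : Fin 2, W ![Lh, Lbh, e A, Lh] = 0 := by
    intro A; rw [hpair Lh Lbh (e A) Lh, b1 A]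
  have c2 : ∀ A : Fin 2, W ![Lh, Lbh, e A, Lbh] = 0 := by
    intro A; rw [hpair Lh Lbh (e A) Lbh, b3 A]
  have c3 : ∀ A : Fin 2, W ![Lbh, Lh, e A, Lh] = 0 := by
    intro A; rw [hpair Lbh Lh (e A) Lh, hβ A]
  have c4 : ∀ A : Fin 2, W ![Lbh, Lh, e A, Lbh] = 0 := by
    intro A; rw [hpair Lbh Lh (e A) Lbh, hβb A]
  -- α-type components
  have a1 : ∀ A B : Fin 2, W ![e A, Lh, e B, Lh] = 0 := by
    intro A B
    rw [hanti1 (e A) Lh (e B) Lh, hanti2 Lh (e A) (e B) Lh, hα A B]; ring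
  have a2 : ∀ A B : Fin 2, W ![e A, Lbh, e B, Lbh] = 0 := by
    intro A B
    rw [hanti1 (e A) Lbh (e B) Lbh, hanti2 Lbh (e A) (e B) Lbh, hαb A B]; ring
  -- ρ-type components
  have r1 : ∀ A B : Fin 2, W ![e A, Lbh, e B, Lh]
      = -((n⁻¹)^2 * ρh) * (if A = B then 1 else 0) := by
    intro A B
    have h := hρAB A B
    rw [Wsmul1, Wsmul3] at h
    have h2 : n⁻¹ * (n⁻¹ * W ![e A, Lbh, e B, Lh])
        = n⁻¹ * (n⁻¹ * (-((n⁻¹)^2 * ρh) * (if A = B then 1 else 0))) := by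
      rw [h]; ring
    exact mul_left_cancel₀ hs (mul_left_cancel₀ hs h2)
  have r2 : ∀ A B : Fin 2, W ![e A, Lh, e B, Lbh]
      = -((n⁻¹)^2 * ρh) * (if A = B then 1 else 0) := by
    intro A B
    rw [hpair (e A) Lh (e B) Lbh, r1 B A]
    by_cases hAB : A = B <;> simp [hAB, eq_comm]
  -- reduce to `W ![L, S, L, S]` with `S = n⁻¹•Lh + n⁻¹•Lbh`
  have hLb' : Lb = (n⁻¹ • Lh + n⁻¹ • Lbh) - L := by
    rw [hL, hLb]; module
  have st1 : W ![L, Lb, L, Lb]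
      = W ![L, n⁻¹ • Lh + n⁻¹ • Lbh, L, n⁻¹ • Lh + n⁻¹ • Lbh] := by
    rw [hLb', Wsub1, Wsub3, Wsub3, z12, z34 L (n⁻¹ • Lh + n⁻¹ • Lbh) L, z34 L L L]
    ring
  subst hμ
  have key : (1/4) * W ![L, Lb, L, Lb]
      = (n⁻¹)^4 * ρh * ((n⁻¹ * ϖ)^2 - (1/2) * (1 - (n⁻¹ * ϖ)^2)) := by
    rw [st1, hL, hSN]
    simp only [Wadd0, Wadd1, Wadd2, Wadd3, Wsmul0, Wsmul1, Wsmul2, Wsmul3]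
    simp only [z12, z34, v1, v2, v3, v4, hβ, hβb, b1, b3, c1, c2, c3, c4, a1, a2, r1, r2]
    norm_num
    linear_combination (-(1/2) * (n⁻¹)^4 * ρh) * hnorm
  exact ⟨key, by rw [key]; ring⟩
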